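/- arXiv:1102.5768 — 4 statements merged into one kernel-verified Lean document; each statement's English description precedes it below -/
import Mathlib

section
/- Let H be a real inner product space and let 1 < p ≤ 2. For all x, y ∈ H one has ⟨F_p(x) − F_p(y), x − y⟩ ≥ (‖x‖^{p−1} − ‖y‖^{p−1})(‖x‖ − ‖y‖). -/
open Real
open scoped RealInnerProductSpace

/-- The p-Laplacian-type map `F_p : H → H`, `F_p x = ‖x‖^(p-2) • x` for `x ≠ 0`,
`F_p 0 = 0`. -/
noncomputable def Fp {H : Type*} [NormedAddCommGroup H] [NormedSpace ℝ H] (p : ℝ) (x : H) : H :=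
  open scoped Classical in
  if x = 0 then 0 else ‖x‖ ^ (p - 2) • x

lemma Fp_eq_rpow_smul {H : Type*} [NormedAddCommGroup H] [NormedSpace ℝ H] (p : ℝ) (x : H) :
    Fp p x = ‖x‖ ^ (p - 2) • x := by
  unfold Fp
  split_ifs with hx <;> simp [hx]

/-- Expanding the left side, this is Cauchy–Schwarz `⟪x, y⟫ ≤ ‖x‖ ‖y‖` weighted by `s + t ≥ 0`. -/
lemma real_inner_smul_sub_smul_sub_ge {H : Type*} [NormedAddCommGroup H] [InnerProductSpace ℝ H]
    {s t : ℝ} (hs : 0 ≤ s) (ht : 0 ≤ t) (x y : H) :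
    ⟪s • x - t • y, x - y⟫ ≥ (s * ‖x‖ - t * ‖y‖) * (‖x‖ - ‖y‖) := by
  have hexpand : ⟪s • x - t • y, x - y⟫ = s * ‖x‖ ^ 2 + t * ‖y‖ ^ 2 - (s + t) * ⟪x, y⟫ := by
    simp only [inner_sub_left, inner_sub_right, real_inner_smul_left, real_inner_self_eq_norm_sq,
      real_inner_comm x y]
    ring
  have hcs : (s + t) * ⟪x, y⟫ ≤ (s + t) * (‖x‖ * ‖y‖) :=
    mul_le_mul_of_nonneg_left (real_inner_le_norm x y) (add_nonneg hs ht)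
  rw [hexpand]
  nlinarith

lemma rpow_sub_two_mul_self {a p : ℝ} (ha : 0 ≤ a) (hp : p ≠ 1) :
    a ^ (p - 2) * a = a ^ (p - 1) := by
  rw [← rpow_add_one' ha (by contrapose! hp; linarith)]
  ring_nf

theorem Fp_inner_sub_ge_general {H : Type*} [NormedAddCommGroup H] [InnerProductSpace ℝ H]
    (p : ℝ) (hp1 : 1 < p) (x y : H) :
    ⟪Fp p x - Fp p y, x - y⟫ ≥ (‖x‖ ^ (p - 1) - ‖y‖ ^ (p - 1)) * (‖x‖ - ‖y‖) := by
  rw [Fp_eq_rpow_smul, Fp_eq_rpow_smul, ← rpow_sub_two_mul_self (norm_nonneg x) hp1.ne',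
    ← rpow_sub_two_mul_self (norm_nonneg y) hp1.ne']
  exact real_inner_smul_sub_smul_sub_ge (rpow_nonneg (norm_nonneg x) _)
    (rpow_nonneg (norm_nonneg y) _) x y

/-- For a real inner product space `H` and `1 < p ≤ 2`, for all `x, y ∈ H` one has
`⟨F_p x − F_p y, x − y⟩ ≥ (‖x‖^(p−1) − ‖y‖^(p−1)) (‖x‖ − ‖y‖)`. -/
theorem Fp_inner_sub_ge {H : Type*} [NormedAddCommGroup H] [InnerProductSpace ℝ H]
    (p : ℝ) (hp1 : 1 < p) (hp2 : p ≤ 2) (x y : H) :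
    ⟪Fp p x - Fp p y, x - y⟫ ≥ (‖x‖ ^ (p - 1) - ‖y‖ ^ (p - 1)) * (‖x‖ - ‖y‖) :=
  Fp_inner_sub_ge_general p hp1 x y
end

section
/- Let (Ω, μ) be a measure space, H a real inner product space, 1 < p ≤ 2, and μ₀ > 0. Let σ, τ : Ω → H be measurable functions in L^p (MemLp p). Then the real function t ↦ (μ₀/p) ∫ ‖σ(x) + t·τ(x)‖^p dμ(x) is differentiable at t = 0 with derivative equal to μ₀ ∫ ‖σ(x)‖^{p−2} ⟨σ(x), τ(x)⟩ dμ(x), where the integrand is taken to be 0 at points where σ(x) = 0. -/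
open MeasureTheory Real Classical
open scoped RealInnerProductSpace

/-!
Pointwise, `t ↦ ‖v + t w‖ ^ p` is differentiable for `p > 1` with derivative
`p ‖u‖ ^ (p - 2) ⟪u, w⟫` at `u = v + t w`. By Cauchy–Schwarz this is at most
`p (‖σ‖ + ‖τ‖) ^ (p - 1) ‖τ‖` for `|t| ≤ 1`, and Hölder's inequality with exponents
`p / (p - 1)` and `p` makes that bound integrable, so the integral may be differentiated
under the integral sign.
-/

section NormRpow

variable {H : Type*} [NormedAddCommGroup H] [InnerProductSpace ℝ H]

theorem hasDerivAt_norm_add_smul_rpow {p : ℝ} (hp : 1 < p) (v w : H) (t : ℝ) :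
    HasDerivAt (fun s : ℝ => ‖v + s • w‖ ^ p)
      (p * ‖v + t • w‖ ^ (p - 2) * ⟪v + t • w, w⟫) t := by
  have hline : HasDerivAt (fun s : ℝ => v + s • w) w t := by
    simpa using ((hasDerivAt_id t).smul_const w).const_add v
  simpa only [Function.comp_def, smul_apply, innerSL_apply_apply, smul_eq_mul, mul_assoc] using
    (hasFDerivAt_norm_rpow (v + t • w) hp).comp_hasDerivAt t hline

theorem abs_norm_rpow_sub_two_mul_inner_le (p : ℝ) (u w : H) :
    |‖u‖ ^ (p - 2) * ⟪u, w⟫| ≤ ‖u‖ ^ (p - 1) * ‖w‖ := by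
  rcases eq_or_ne u 0 with rfl | hu
  · simp only [inner_zero_left, mul_zero, abs_zero]
    positivity
  calc |‖u‖ ^ (p - 2) * ⟪u, w⟫| = ‖u‖ ^ (p - 2) * |⟪u, w⟫| := by
        rw [abs_mul, abs_of_nonneg (by positivity)]
    _ ≤ ‖u‖ ^ (p - 2) * (‖u‖ * ‖w‖) := by gcongr; exact abs_real_inner_le_norm u w
    _ = ‖u‖ ^ (p - 1) * ‖w‖ := by
        rw [← mul_assoc, ← rpow_add_one (norm_ne_zero_iff.mpr hu)]
        ring_nf

theorem norm_deriv_norm_add_smul_rpow_le {p : ℝ} (hp : 1 ≤ p) (v w : H) {t : ℝ} (ht : |t| ≤ 1) :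
    ‖p * ‖v + t • w‖ ^ (p - 2) * ⟪v + t • w, w⟫‖ ≤ p * ((‖v‖ + ‖w‖) ^ (p - 1) * ‖w‖) := by
  have hline_le : ‖v + t • w‖ ≤ ‖v‖ + ‖w‖ := by
    calc ‖v + t • w‖ ≤ ‖v‖ + |t| * ‖w‖ := by simpa [norm_smul] using norm_add_le v (t • w)
      _ ≤ ‖v‖ + ‖w‖ := by nlinarith [norm_nonneg w]
  rw [mul_assoc, norm_mul, norm_eq_abs, norm_eq_abs, abs_of_nonneg (by linarith)]
  gcongr
  exact (abs_norm_rpow_sub_two_mul_inner_le p _ _).trans (by gcongr)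

end NormRpow

theorem MeasureTheory.MemLp.integrable_norm_rpow_sub_one_mul {α : Type*} [MeasurableSpace α]
    {μ : Measure α} {p : ℝ} (hp : 1 < p) {f g : α → ℝ}
    (hf : MemLp f (ENNReal.ofReal p) μ) (hg : MemLp g (ENNReal.ofReal p) μ) :
    Integrable (fun x => ‖f x‖ ^ (p - 1) * g x) μ := by
  have hconj : ENNReal.HolderConjugate (ENNReal.ofReal (p / (p - 1))) (ENNReal.ofReal p) :=
    (Real.HolderConjugate.conjExponent hp).symm.ennrealOfReal
  have hf' : MemLp (fun x => ‖f x‖ ^ (p - 1)) (ENNReal.ofReal (p / (p - 1))) μ := by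
    rw [ENNReal.ofReal_div_of_pos (by linarith)]
    simpa [ENNReal.toReal_ofReal (by linarith : 0 ≤ p - 1)] using
      hf.norm_rpow_div (ENNReal.ofReal (p - 1))
  exact hf'.integrable_mul hg

theorem MeasureTheory.hasDerivAt_integral_norm_add_smul_rpow {Ω H : Type*} [MeasurableSpace Ω]
    [NormedAddCommGroup H] [InnerProductSpace ℝ H] {μ : Measure Ω} {p : ℝ} (hp : 1 < p)
    {σ τ : Ω → H} (hσ : MemLp σ (ENNReal.ofReal p) μ) (hτ : MemLp τ (ENNReal.ofReal p) μ) :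
    HasDerivAt (fun t : ℝ => ∫ x, ‖σ x + t • τ x‖ ^ p ∂μ)
      (∫ x, p * ‖σ x‖ ^ (p - 2) * ⟪σ x, τ x⟫ ∂μ) 0 := by
  have hp0 : 0 < p := by linarith
  have hF_meas (t : ℝ) : AEStronglyMeasurable (fun x => ‖σ x + t • τ x‖ ^ p) μ :=
    ((hσ.1.add (hτ.1.const_smul t)).norm.aemeasurable.pow_const p).aestronglyMeasurable
  have hF_int : Integrable (fun x => ‖σ x‖ ^ p) μ := by
    simpa [ENNReal.toReal_ofReal hp0.le] using
      hσ.integrable_norm_rpow (by simpa using hp0) ENNReal.ofReal_ne_top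
  have hF'_meas : AEStronglyMeasurable (fun x => p * ‖σ x‖ ^ (p - 2) * ⟪σ x, τ x⟫) μ :=
    (aestronglyMeasurable_const.mul (hσ.1.norm.aemeasurable.pow_const _).aestronglyMeasurable).mul
      (continuous_inner.comp_aestronglyMeasurable (hσ.1.prodMk hτ.1))
  have hbound_int : Integrable (fun x => p * ((‖σ x‖ + ‖τ x‖) ^ (p - 1) * ‖τ x‖)) μ := by
    refine (((hσ.norm.add hτ.norm).integrable_norm_rpow_sub_one_mul hp hτ.norm).const_mul p).congr
      (.of_forall fun x => ?_)
    simp [abs_of_nonneg, add_nonneg]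
  have hbound : ∀ x, ∀ t ∈ Metric.ball (0 : ℝ) 1,
      ‖p * ‖σ x + t • τ x‖ ^ (p - 2) * ⟪σ x + t • τ x, τ x⟫‖
        ≤ p * ((‖σ x‖ + ‖τ x‖) ^ (p - 1) * ‖τ x‖) := fun x t ht =>
    norm_deriv_norm_add_smul_rpow_le hp.le (σ x) (τ x) (mem_ball_zero_iff.mp ht).le
  refine (hasDerivAt_integral_of_dominated_loc_of_deriv_le (Metric.ball_mem_nhds 0 one_pos)
    (.of_forall hF_meas) (by simpa using hF_int) (by simpa using hF'_meas) (.of_forall hbound)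
    hbound_int (.of_forall fun x t _ => hasDerivAt_norm_add_smul_rpow hp (σ x) (τ x) t)).2
    |>.congr_deriv (by simp)

theorem energy_functional_gateaux_deriv_general {Ω H : Type*} [MeasurableSpace Ω]
    [NormedAddCommGroup H] [InnerProductSpace ℝ H] (μ : Measure Ω)
    (p : ℝ) (hp1 : 1 < p) (μ₀ : ℝ)
    (σ τ : Ω → H)
    (hσ : MemLp σ (ENNReal.ofReal p) μ) (hτ : MemLp τ (ENNReal.ofReal p) μ) :
    HasDerivAt (fun t : ℝ => (μ₀ / p) * ∫ x, ‖σ x + t • τ x‖ ^ p ∂μ)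
      (μ₀ * ∫ x, (if σ x = 0 then 0 else ‖σ x‖ ^ (p - 2) * ⟪σ x, τ x⟫) ∂μ) 0 := by
  have hp0 : p ≠ 0 := by linarith
  refine ((hasDerivAt_integral_norm_add_smul_rpow hp1 hσ hτ).const_mul (μ₀ / p)).congr_deriv ?_
  have hintegrand (x : Ω) : p * ‖σ x‖ ^ (p - 2) * ⟪σ x, τ x⟫
      = p * (if σ x = 0 then 0 else ‖σ x‖ ^ (p - 2) * ⟪σ x, τ x⟫) := by
    split_ifs with h <;> simp [h, mul_assoc]
  simp_rw [hintegrand, integral_const_mul]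
  field_simp

/-- Gâteaux differentiability of the viscous energy functional
`J(σ) = (μ₀/p) ∫ ‖σ‖^p dμ` on `L^p`, `1 < p ≤ 2`, `μ₀ > 0`: for `σ, τ ∈ L^p`, the map
`t ↦ (μ₀/p) ∫ ‖σ + t τ‖^p dμ` is differentiable at `t = 0` with derivative
`μ₀ ∫ ‖σ‖^(p−2) ⟨σ, τ⟩ dμ` (integrand taken to be `0` where `σ x = 0`). -/
theorem energy_functional_gateaux_deriv {Ω H : Type*} [MeasurableSpace Ω]
    [NormedAddCommGroup H] [InnerProductSpace ℝ H] (μ : Measure Ω)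
    (p : ℝ) (hp1 : 1 < p) (hp2 : p ≤ 2) (μ₀ : ℝ) (hμ₀ : 0 < μ₀)
    (σ τ : Ω → H)
    (hσ : MemLp σ (ENNReal.ofReal p) μ) (hτ : MemLp τ (ENNReal.ofReal p) μ) :
    HasDerivAt (fun t : ℝ => (μ₀ / p) * ∫ x, ‖σ x + t • τ x‖ ^ p ∂μ)
      (μ₀ * ∫ x, (if σ x = 0 then 0 else ‖σ x‖ ^ (p - 2) * ⟪σ x, τ x⟫) ∂μ) 0 :=
  energy_functional_gateaux_deriv_general μ p hp1 μ₀ σ τ hσ hτ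
end

section
/- Let (Ω, μ) be a measure space, H a real inner product space, and 1 < p ≤ 2. Let σ₁, σ₂ : Ω → H be measurable functions in L^p (MemLp p) that are not almost-everywhere equal. Then ∫ ⟨F_p(σ₁(x)) − F_p(σ₂(x)), σ₁(x) − σ₂(x)⟩ dμ(x) > 0. -/
open MeasureTheory Real
open scoped RealInnerProductSpace ENNReal

/-!
Pointwise, `⟪F_p a - F_p b, a - b⟫ ≥ (‖a‖^(p-1) - ‖b‖^(p-1)) (‖a‖ - ‖b‖)` by Cauchy–Schwarz, which
is positive when the norms differ; when they agree, `F_p a - F_p b = ‖a‖^(p-2) • (a - b)`. So the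
integrand is nonnegative and positive wherever `σ₁ ≠ σ₂`, a set of positive measure. It is
integrable by Hölder, since `F_p ∘ σ` lies in `L^{p'}` with `p' = p / (p - 1)`.
-/

lemma rpow_sub_one_eq_rpow_sub_two_mul {p r : ℝ} (hp : p ≠ 1) (hr : 0 ≤ r) :
    r ^ (p - 1) = r ^ (p - 2) * r := by
  rw [← rpow_add_one' hr (by contrapose! hp; linarith)]
  ring_nf

section Pointwise

variable {H : Type*}

lemma Fp_eq_smul [NormedAddCommGroup H] [NormedSpace ℝ H] (p : ℝ) (x : H) :
    Fp p x = ‖x‖ ^ (p - 2) • x := by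
  unfold Fp
  split_ifs with hx
  · simp [hx]
  · rfl

lemma norm_Fp [NormedAddCommGroup H] [NormedSpace ℝ H] {p : ℝ} (hp : p ≠ 1) (x : H) :
    ‖Fp p x‖ = ‖x‖ ^ (p - 1) := by
  rw [Fp_eq_smul, norm_smul, norm_of_nonneg (rpow_nonneg (norm_nonneg x) _),
    rpow_sub_one_eq_rpow_sub_two_mul hp (norm_nonneg x)]

variable [NormedAddCommGroup H] [InnerProductSpace ℝ H]

lemma mul_sub_le_inner_Fp_sub {p : ℝ} (hp : p ≠ 1) (a b : H) :
    (‖a‖ ^ (p - 1) - ‖b‖ ^ (p - 1)) * (‖a‖ - ‖b‖) ≤ ⟪Fp p a - Fp p b, a - b⟫ := by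
  have hexpand : ⟪Fp p a - Fp p b, a - b⟫ =
      ‖a‖ ^ (p - 2) * (‖a‖ ^ 2 - ⟪a, b⟫) + ‖b‖ ^ (p - 2) * (‖b‖ ^ 2 - ⟪a, b⟫) := by
    simp only [Fp_eq_smul, inner_sub_left, inner_sub_right, real_inner_smul_left,
      real_inner_self_eq_norm_sq, real_inner_comm a b]
    ring
  have hcs : ⟪a, b⟫ ≤ ‖a‖ * ‖b‖ := real_inner_le_norm a b
  rw [hexpand, rpow_sub_one_eq_rpow_sub_two_mul hp (norm_nonneg a),
    rpow_sub_one_eq_rpow_sub_two_mul hp (norm_nonneg b)]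
  nlinarith [mul_le_mul_of_nonneg_left hcs (rpow_nonneg (norm_nonneg a) (p - 2)),
    mul_le_mul_of_nonneg_left hcs (rpow_nonneg (norm_nonneg b) (p - 2))]

lemma Fp_sub_Fp_of_norm_eq (p : ℝ) {a b : H} (hab : ‖a‖ = ‖b‖) :
    Fp p a - Fp p b = ‖a‖ ^ (p - 2) • (a - b) := by
  rw [Fp_eq_smul, Fp_eq_smul, ← hab, smul_sub]

lemma inner_Fp_sub_pos {p : ℝ} (hp : 1 < p) {a b : H} (hab : a ≠ b) :
    0 < ⟪Fp p a - Fp p b, a - b⟫ := by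
  rcases eq_or_ne ‖a‖ ‖b‖ with hnorm | hnorm
  · have ha : 0 < ‖a‖ := by
      rw [hnorm, norm_pos_iff]
      rintro rfl
      exact hab (by simpa using hnorm)
    rw [Fp_sub_Fp_of_norm_eq p hnorm, real_inner_smul_left, real_inner_self_eq_norm_sq]
    have : 0 < ‖a - b‖ := norm_pos_iff.2 (sub_ne_zero.2 hab)
    positivity
  · refine lt_of_lt_of_le ?_ (mul_sub_le_inner_Fp_sub hp.ne' a b)
    have hq : 0 < p - 1 := by linarith
    rcases hnorm.lt_or_gt with hlt | hlt
    · exact mul_pos_of_neg_of_neg (sub_neg.2 (rpow_lt_rpow (norm_nonneg a) hlt hq))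
        (sub_neg.2 hlt)
    · exact mul_pos (sub_pos.2 (rpow_lt_rpow (norm_nonneg b) hlt hq)) (sub_pos.2 hlt)

lemma inner_Fp_sub_nonneg {p : ℝ} (hp : 1 < p) (a b : H) :
    0 ≤ ⟪Fp p a - Fp p b, a - b⟫ := by
  rcases eq_or_ne a b with rfl | hab
  · simp
  · exact (inner_Fp_sub_pos hp hab).le

end Pointwise

namespace MeasureTheory

variable {Ω H : Type*} [MeasurableSpace Ω] {μ : Measure Ω}

lemma AEStronglyMeasurable.Fp [NormedAddCommGroup H] [NormedSpace ℝ H] {σ : Ω → H}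
    (hσ : AEStronglyMeasurable σ μ) (p : ℝ) : AEStronglyMeasurable (fun x => Fp p (σ x)) μ := by
  simp_rw [Fp_eq_smul]
  exact (hσ.norm.aemeasurable.pow_const (p - 2)).aestronglyMeasurable.smul hσ

lemma MemLp.Fp [NormedAddCommGroup H] [NormedSpace ℝ H] {p : ℝ} (hp : 1 < p) {σ : Ω → H}
    (hσ : MemLp σ (ENNReal.ofReal p) μ) :
    MemLp (fun x => Fp p (σ x)) (ENNReal.ofReal p.conjExponent) μ := by
  have hq : 0 < p - 1 := by linarith
  have hpow := hσ.norm_rpow_div (ENNReal.ofReal (p - 1))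
  rw [ENNReal.toReal_ofReal hq.le, ← ENNReal.ofReal_div_of_pos hq] at hpow
  refine hpow.of_le (hσ.1.Fp p) (Filter.Eventually.of_forall fun x => ?_)
  rw [norm_Fp hp.ne', norm_of_nonneg (rpow_nonneg (norm_nonneg _) _)]

lemma MemLp.integrable_inner [NormedAddCommGroup H] [InnerProductSpace ℝ H] {p q : ℝ≥0∞}
    [p.HolderConjugate q] {f g : Ω → H} (hf : MemLp f p μ) (hg : MemLp g q μ) :
    Integrable (fun x => ⟪f x, g x⟫) μ :=
  (hf.norm.integrable_mul hg.norm).mono' (hf.1.inner hg.1)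
    (Filter.Eventually.of_forall fun x => abs_real_inner_le_norm (f x) (g x))

end MeasureTheory

theorem integral_Fp_strictMonotone_general {Ω H : Type*} [MeasurableSpace Ω]
    [NormedAddCommGroup H] [InnerProductSpace ℝ H] (μ : Measure Ω)
    (p : ℝ) (hp1 : 1 < p) (σ₁ σ₂ : Ω → H)
    (h₁ : MemLp σ₁ (ENNReal.ofReal p) μ) (h₂ : MemLp σ₂ (ENNReal.ofReal p) μ)
    (hne : ¬ σ₁ =ᵐ[μ] σ₂) :
    0 < ∫ x, ⟪Fp p (σ₁ x) - Fp p (σ₂ x), σ₁ x - σ₂ x⟫ ∂μ := by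
  have : (ENNReal.ofReal p.conjExponent).HolderConjugate (ENNReal.ofReal p) :=
    (Real.HolderConjugate.conjExponent hp1).symm.ennrealOfReal
  have hint : Integrable (fun x => ⟪Fp p (σ₁ x) - Fp p (σ₂ x), σ₁ x - σ₂ x⟫) μ :=
    ((h₁.Fp hp1).sub (h₂.Fp hp1)).integrable_inner (h₁.sub h₂)
  rw [integral_pos_iff_support_of_nonneg (fun x => inner_Fp_sub_nonneg hp1 _ _) hint]
  have hdiff : 0 < μ {x | σ₁ x ≠ σ₂ x} := by
    rw [pos_iff_ne_zero]
    exact fun h => hne (ae_iff.2 (by simpa using h))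
  exact hdiff.trans_le (measure_mono fun x hx => (inner_Fp_sub_pos hp1 hx).ne')

/-- Strict monotonicity of the Gâteaux derivative of the viscous energy functional on `L^p`:
for `1 < p ≤ 2` and `σ₁, σ₂ ∈ L^p(Ω; H)` that are not a.e. equal,
`∫ ⟨F_p(σ₁) − F_p(σ₂), σ₁ − σ₂⟩ dμ > 0`. -/
theorem integral_Fp_strictMonotone {Ω H : Type*} [MeasurableSpace Ω]
    [NormedAddCommGroup H] [InnerProductSpace ℝ H] (μ : Measure Ω)
    (p : ℝ) (hp1 : 1 < p) (hp2 : p ≤ 2) (σ₁ σ₂ : Ω → H)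
    (h₁ : MemLp σ₁ (ENNReal.ofReal p) μ) (h₂ : MemLp σ₂ (ENNReal.ofReal p) μ)
    (hne : ¬ σ₁ =ᵐ[μ] σ₂) :
    0 < ∫ x, ⟪Fp p (σ₁ x) - Fp p (σ₂ x), σ₁ x - σ₂ x⟫ ∂μ :=
  integral_Fp_strictMonotone_general μ p hp1 σ₁ σ₂ h₁ h₂ hne
end

section
/- Let (Ω, μ) be a measure space, H a real inner product space, and 1 < p ≤ 2. Let σ, τ, η : Ω → H be measurable functions in L^p (MemLp p). Then the map ℝ → ℝ given by t ↦ ∫ ‖σ(x) + t·τ(x)‖^{p−2} ⟨σ(x) + t·τ(x), η(x)⟩ dμ(x) (with the integrand taken to be 0 at points where σ(x) + t·τ(x) = 0) is continuous. -/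
/-!
The integrand is `ψ(σ x + t • τ x, η x)` with `ψ(u, v) = ‖u‖^(p-2) ⟪u, v⟫` (and `ψ(0, v) = 0`),
which is jointly continuous for `p > 1` because `|ψ(u, v)| ≤ ‖u‖^(p-1) ‖v‖` forces continuity at
`u = 0`. For `|t|` bounded by `M`, the integrand is dominated by `(‖σ‖ + M ‖τ‖)^(p-1) ‖η‖`, which is
integrable by Hölder's inequality with exponents `p / (p-1)` and `p`; dominated convergence
concludes.
-/

open MeasureTheory Real Classical
open scoped RealInnerProductSpace

section pDualityPairing

variable {H : Type*} [NormedAddCommGroup H] [InnerProductSpace ℝ H] {p : ℝ}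

/-- `⟪J_p u, v⟫` for the duality map `J_p u = ‖u‖^(p-2) • u` of `‖·‖^p / p`. -/
noncomputable def pDualityPairing (p : ℝ) (u v : H) : ℝ :=
  if u = 0 then 0 else ‖u‖ ^ (p - 2) * ⟪u, v⟫

theorem abs_pDualityPairing_le (p : ℝ) (u v : H) :
    |pDualityPairing p u v| ≤ ‖u‖ ^ (p - 1) * ‖v‖ := by
  unfold pDualityPairing
  split_ifs with hu
  · simp only [abs_zero]
    positivity
  · calc |‖u‖ ^ (p - 2) * ⟪u, v⟫| = ‖u‖ ^ (p - 2) * |⟪u, v⟫| := by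
          rw [abs_mul, abs_of_nonneg (by positivity)]
      _ ≤ ‖u‖ ^ (p - 2) * (‖u‖ * ‖v‖) := by gcongr; exact abs_real_inner_le_norm u v
      _ = ‖u‖ ^ (p - 1) * ‖v‖ := by
          rw [show p - 1 = p - 2 + 1 by ring, rpow_add (norm_pos_iff.2 hu), rpow_one]
          ring

theorem continuous_pDualityPairing (hp : 1 < p) :
    Continuous (fun uv : H × H => pDualityPairing p uv.1 uv.2) := by
  refine continuous_iff_continuousAt.2 fun ⟨u₀, v₀⟩ => ?_
  rcases eq_or_ne u₀ 0 with rfl | hu₀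
  · have hbound : Continuous (fun uv : H × H => ‖uv.1‖ ^ (p - 1) * ‖uv.2‖) := by
      fun_prop (disch := linarith)
    have hbound0 := hbound.tendsto ((0 : H), v₀)
    simp only [norm_zero, zero_rpow (sub_pos.2 hp).ne', zero_mul] at hbound0
    simpa [ContinuousAt, pDualityPairing] using
      squeeze_zero_norm (fun uv => abs_pDualityPairing_le p uv.1 uv.2) hbound0
  · have hsmooth : ContinuousAt (fun uv : H × H => ‖uv.1‖ ^ (p - 2) * ⟪uv.1, uv.2⟫) (u₀, v₀) := by
      fun_prop (disch := exact Or.inl (norm_ne_zero_iff.2 hu₀))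
    refine hsmooth.congr ?_
    filter_upwards [continuous_fst.continuousAt.eventually_ne hu₀] with uv huv
    simp [pDualityPairing, huv]

end pDualityPairing

theorem norm_add_smul_le_of_abs_le {E : Type*} [SeminormedAddCommGroup E] [NormedSpace ℝ E]
    {u v : E} {t M : ℝ} (ht : |t| ≤ M) : ‖u + t • v‖ ≤ ‖u‖ + M * ‖v‖ :=
  (norm_add_le _ _).trans (by rw [norm_smul, norm_eq_abs]; gcongr)

theorem MeasureTheory.MemLp.integrable_norm_rpow_sub_one_mul_norm {Ω E F : Type*}
    [MeasurableSpace Ω] [NormedAddCommGroup E] [NormedAddCommGroup F] {μ : Measure Ω} {p : ℝ}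
    (hp : 1 < p) {f : Ω → E} {g : Ω → F}
    (hf : MemLp f (ENNReal.ofReal p) μ) (hg : MemLp g (ENNReal.ofReal p) μ) :
    Integrable (fun x => ‖f x‖ ^ (p - 1) * ‖g x‖) μ := by
  have hf' : MemLp (fun x => ‖f x‖ ^ (p - 1)) (ENNReal.ofReal (p / (p - 1))) μ := by
    simpa [ENNReal.ofReal_div_of_pos (sub_pos.2 hp), ENNReal.toReal_ofReal (sub_pos.2 hp).le]
      using hf.norm_rpow_div (ENNReal.ofReal (p - 1))
  have : ENNReal.HolderConjugate (ENNReal.ofReal (p / (p - 1))) (ENNReal.ofReal p) :=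
    (Real.HolderConjugate.conjExponent hp).ennrealOfReal.symm
  exact hf'.integrable_mul hg.norm

theorem integral_Fp_pairing_hemicontinuous_general {Ω H : Type*} [MeasurableSpace Ω]
    [NormedAddCommGroup H] [InnerProductSpace ℝ H] (μ : Measure Ω)
    (p : ℝ) (hp1 : 1 < p) (σ τ η : Ω → H)
    (hσ : MemLp σ (ENNReal.ofReal p) μ) (hτ : MemLp τ (ENNReal.ofReal p) μ)
    (hη : MemLp η (ENNReal.ofReal p) μ) :
    Continuous (fun t : ℝ =>
      ∫ x, (if σ x + t • τ x = 0 then 0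
            else ‖σ x + t • τ x‖ ^ (p - 2) * ⟪σ x + t • τ x, η x⟫) ∂μ) := by
  change Continuous fun t : ℝ => ∫ x, pDualityPairing p (σ x + t • τ x) (η x) ∂μ
  have hψ := continuous_pDualityPairing (H := H) hp1
  refine continuous_iff_continuousAt.2 fun t₀ => ?_
  set w : Ω → ℝ := fun x => ‖σ x‖ + (|t₀| + 1) * ‖τ x‖
  have hw : MemLp w (ENNReal.ofReal p) μ := hσ.norm.add (hτ.norm.const_mul _)
  refine continuousAt_of_dominated (bound := fun x => ‖w x‖ ^ (p - 1) * ‖η x‖) ?_ ?_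
    (hw.integrable_norm_rpow_sub_one_mul_norm hp1 hη) ?_
  · exact .of_forall fun t =>
      hψ.comp_aestronglyMeasurable ((hσ.1.add (hτ.1.const_smul t)).prodMk hη.1)
  · filter_upwards [(continuous_abs.tendsto t₀).eventually_lt_const (lt_add_one |t₀|)]
      with t ht
    refine .of_forall fun x => (abs_pDualityPairing_le p _ _).trans ?_
    gcongr
    exact (norm_add_smul_le_of_abs_le ht.le).trans (le_norm_self _)
  · exact .of_forall fun x =>
      (hψ.comp (f := fun t : ℝ => (σ x + t • τ x, η x)) (by fun_prop)).continuousAt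

/-- Hemicontinuity of the Gâteaux derivative of the viscous energy functional on `L^p`:
for a measure space `(Ω, μ)`, a real inner product space `H`, `1 < p ≤ 2`, and
`σ, τ, η ∈ L^p(Ω; H)`, the map
`t ↦ ∫ ‖σ + t τ‖^(p−2) ⟨σ + t τ, η⟩ dμ`
(the integrand taken to be `0` where `σ x + t • τ x = 0`) is continuous on `ℝ`. -/
theorem integral_Fp_pairing_hemicontinuous {Ω H : Type*} [MeasurableSpace Ω]
    [NormedAddCommGroup H] [InnerProductSpace ℝ H] (μ : Measure Ω)
    (p : ℝ) (hp1 : 1 < p) (hp2 : p ≤ 2) (σ τ η : Ω → H)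
    (hσ : MemLp σ (ENNReal.ofReal p) μ) (hτ : MemLp τ (ENNReal.ofReal p) μ)
    (hη : MemLp η (ENNReal.ofReal p) μ) :
    Continuous (fun t : ℝ =>
      ∫ x, (if σ x + t • τ x = 0 then 0
            else ‖σ x + t • τ x‖ ^ (p - 2) * ⟪σ x + t • τ x, η x⟫) ∂μ) :=
  integral_Fp_pairing_hemicontinuous_general μ p hp1 σ τ η hσ hτ hη
end
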